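/- Let Γ be a k-graph, E a k-coloured graph, and C a complete, associative collection of squares in E. Suppose ψ: E_Γ → E is a coloured-graph isomorphism from the skeleton of Γ to E such that ψ ∘ φ ∈ C for every square φ ∈ C_Γ. Then the map γ ↦ θ_γ, where θ_γ(m) = ψ(γ(m)) on vertices and θ_γ(m + v_i) = ψ(γ(m, m+e_i)) on edges, is a k-graph isomorphism from Γ onto Λ_{(E,C)}. -/

import Mathlib

namespace Paper


/-- A `k`-graph structure on object type `Obj` and morphism type `Hom`:
a countable category with a degree functor to `ℕ^k` satisfying the
unique factorisation property.  `comp μ ν` is the composite "μ then ν",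
meaningful when `src μ = rng ν`. -/
structure KGraph (k : ℕ) (Obj Hom : Type) where
  src : Hom → Obj
  rng : Hom → Obj
  comp : Hom → Hom → Hom
  idm : Obj → Hom
  d : Hom → Fin k → ℕ
  countObj : Countable Obj
  countHom : Countable Hom
  src_comp : ∀ μ ν, src μ = rng ν → src (comp μ ν) = src ν
  rng_comp : ∀ μ ν, src μ = rng ν → rng (comp μ ν) = rng μ
  comp_assoc : ∀ l μ ν, src l = rng μ → src μ = rng ν →
    comp (comp l μ) ν = comp l (comp μ ν)
  src_idm : ∀ v, src (idm v) = v
  rng_idm : ∀ v, rng (idm v) = v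
  comp_idm : ∀ μ, comp μ (idm (src μ)) = μ
  idm_comp : ∀ μ, comp (idm (rng μ)) μ = μ
  d_comp : ∀ μ ν, src μ = rng ν → d (comp μ ν) = d μ + d ν
  d_idm : ∀ v, d (idm v) = 0
  factor : ∀ (lam : Hom) (m n : Fin k → ℕ), d lam = m + n →
    ∃! p : Hom × Hom, src p.1 = rng p.2 ∧ comp p.1 p.2 = lam ∧ d p.1 = m ∧ d p.2 = n

variable {k : ℕ} {Obj Hom : Type}

/-- `IsSegment Λ lam seg p q` says that `seg = lam(p,q)`, i.e. `seg` is the middle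
factor of `lam` in a factorisation `lam = a ⬝ seg ⬝ b` with `d a = p`, `d seg = q - p`. -/
def IsSegment (Λ : KGraph k Obj Hom) (lam seg : Hom) (p q : Fin k → ℕ) : Prop :=
  ∃ a b : Hom, Λ.src a = Λ.rng seg ∧ Λ.src seg = Λ.rng b ∧
    Λ.comp a (Λ.comp seg b) = lam ∧ Λ.d a = p ∧ Λ.d seg = q - p

/-- Aperiodicity in the finite-path formulation of Robertson–Sims. -/
def Aperiodic (Λ : KGraph k Obj Hom) : Prop :=
  ∀ (v : Obj) (m n : Fin k → ℕ), m ≠ n → ∃ lam : Hom,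
    Λ.rng lam = v ∧ m ⊔ n ≤ Λ.d lam ∧
    ∀ s1 s2 : Hom, IsSegment Λ lam s1 m (m + (Λ.d lam - (m ⊔ n))) →
      IsSegment Λ lam s2 n (n + (Λ.d lam - (m ⊔ n))) → s1 ≠ s2

def NoSources (Λ : KGraph k Obj Hom) : Prop :=
  ∀ (v : Obj) (i : Fin k), ∃ h : Hom, Λ.rng h = v ∧ Λ.d h = Pi.single i 1

def RowFinite (Λ : KGraph k Obj Hom) : Prop :=
  ∀ (v : Obj) (i : Fin k), {h : Hom | Λ.rng h = v ∧ Λ.d h = Pi.single i 1}.Finite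

def Cofinal (Λ : KGraph k Obj Hom) : Prop :=
  ∀ v w : Obj, ∃ n : Fin k → ℕ, ∀ lam : Hom, Λ.rng lam = w → Λ.d lam = n →
    ∃ μ : Hom, Λ.rng μ = v ∧ Λ.src μ = Λ.src lam

/-- A degree-preserving functor between `k`-graphs. -/
structure KFunctor {O H O' H' : Type} (Λ : KGraph k O H) (Γ : KGraph k O' H') where
  onObj : O → O'
  onHom : H → H'
  rng_comm : ∀ h, Γ.rng (onHom h) = onObj (Λ.rng h)
  src_comm : ∀ h, Γ.src (onHom h) = onObj (Λ.src h)
  idm_comm : ∀ v, onHom (Λ.idm v) = Γ.idm (onObj v)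
  comp_comm : ∀ μ ν, Λ.src μ = Λ.rng ν → onHom (Λ.comp μ ν) = Γ.comp (onHom μ) (onHom ν)
  d_comm : ∀ h, Γ.d (onHom h) = Λ.d h

/-- An infinite path in a `k`-graph: a `k`-graph morphism from `Ω_k`. -/
structure InfPath (Λ : KGraph k Obj Hom) where
  vert : (Fin k → ℕ) → Obj
  seg : ∀ p q : Fin k → ℕ, p ≤ q → Hom
  rng_seg : ∀ p q h, Λ.rng (seg p q h) = vert p
  src_seg : ∀ p q h, Λ.src (seg p q h) = vert q
  d_seg : ∀ p q h, Λ.d (seg p q h) = q - p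
  comp_seg : ∀ p q r (h1 : p ≤ q) (h2 : q ≤ r),
    Λ.comp (seg p q h1) (seg q r h2) = seg p r (h1.trans h2)

/-- The shift `σ^p` on infinite paths. -/
def InfPath.shift (Λ : KGraph k Obj Hom) (p : Fin k → ℕ) (x : InfPath Λ) : InfPath Λ where
  vert q := x.vert (p + q)
  seg q r h := x.seg (p + q) (p + r) (add_le_add (le_refl p) h)
  rng_seg q r h := x.rng_seg _ _ _
  src_seg q r h := x.src_seg _ _ _
  d_seg q r h := by
    rw [x.d_seg]
    funext i
    simp [Nat.add_sub_add_left]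
  comp_seg q r t h1 h2 := x.comp_seg _ _ _ _ _



/-- A `k`-coloured (directed) graph. -/
structure ColouredGraph (k : ℕ) where
  V : Type
  E : Type
  r : E → V
  s : E → V
  c : E → Fin k

variable {k : ℕ}

/-- The model grid `E_{k,m}`: vertices `{n ≤ m}`, an edge of colour `i`
from `n + e_i` to `n` whenever `n + e_i ≤ m`. -/
def grid (k : ℕ) (m : Fin k → ℕ) : ColouredGraph k where
  V := {n : Fin k → ℕ // n ≤ m}
  E := {p : (Fin k → ℕ) × Fin k // p.1 + Pi.single p.2 1 ≤ m}
  r e := ⟨e.1.1, le_trans (le_add_of_nonneg_right zero_le) e.2⟩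
  s e := ⟨e.1.1 + Pi.single e.1.2 1, e.2⟩
  c e := e.1.2

/-- A coloured-graph morphism. -/
structure CGM (E F : ColouredGraph k) where
  onV : E.V → F.V
  onE : E.E → F.E
  r_comm : ∀ e, F.r (onE e) = onV (E.r e)
  s_comm : ∀ e, F.s (onE e) = onV (E.s e)
  c_comm : ∀ e, F.c (onE e) = E.c e

/-- Composition of coloured-graph morphisms. -/
def CGM.compose {E F G : ColouredGraph k} (g : CGM F G) (f : CGM E F) : CGM E G where
  onV := g.onV ∘ f.onV
  onE := g.onE ∘ f.onE
  r_comm e := by simp [Function.comp, g.r_comm, f.r_comm]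
  s_comm e := by simp [Function.comp, g.s_comm, f.s_comm]
  c_comm e := by simp [Function.comp, g.c_comm, f.c_comm]

/-- The range `λ(0)` of a coloured-graph morphism defined on a grid. -/
def gRng {E : ColouredGraph k} {m : Fin k → ℕ} (lam : CGM (grid k m) E) : E.V :=
  lam.onV ⟨0, zero_le⟩

/-- The source `λ(m)` of a coloured-graph morphism defined on a grid. -/
def gSrc {E : ColouredGraph k} {m : Fin k → ℕ} (lam : CGM (grid k m) E) : E.V :=
  lam.onV ⟨m, le_refl m⟩

/-- The translated restriction `λ|*_{[p, p+m']}` of `λ : E_{k,M} → E`. -/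
def restrictTo {E : ColouredGraph k} {M : Fin k → ℕ} (lam : CGM (grid k M) E)
    (p m' : Fin k → ℕ) (h : p + m' ≤ M) : CGM (grid k m') E where
  onV n := lam.onV ⟨p + n.1, le_trans (add_le_add (le_refl p) n.2) h⟩
  onE e := lam.onE ⟨(p + e.1.1, e.1.2), by
    rw [add_assoc]; exact le_trans (add_le_add (le_refl p) e.2) h⟩
  r_comm e := lam.r_comm _
  s_comm e := by
    refine (lam.s_comm _).trans ?_
    exact congrArg lam.onV (Subtype.ext (add_assoc p e.1.1 _))
  c_comm e := lam.c_comm _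

/-- A coloured-graph morphism from some grid into `E`, bundled with its degree. -/
def MorphOf (E : ColouredGraph k) : Type := Σ m : Fin k → ℕ, CGM (grid k m) E

/-- The shape (abelianized colouring) of a finite path, as an element of `ℕ^k`. -/
def colourVec (E : ColouredGraph k) (x : List E.E) : Fin k → ℕ :=
  (x.map (fun e => Pi.single (E.c e) 1)).sum

/-- A list of edges is a path when consecutive edges are composable. -/
def IsPathList (E : ColouredGraph k) (x : List E.E) : Prop :=
  x.Chain' (fun e f => E.s e = E.r f)

/-- `x` traverses `λ`: the edges of `x` match those of `λ` along the staircase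
determined by the colour sequence of `x`. -/
def Traverses {E : ColouredGraph k} {m : Fin k → ℕ} (lam : CGM (grid k m) E)
    (x : List E.E) : Prop :=
  colourVec E x = m ∧ ∀ (l : ℕ) (hl : l < x.length),
    ∃ h : colourVec E (x.take l) + Pi.single (E.c (x.get ⟨l, hl⟩)) 1 ≤ m,
      lam.onE ⟨(colourVec E (x.take l), E.c (x.get ⟨l, hl⟩)), h⟩ = x.get ⟨l, hl⟩

/-- A bundled grid morphism is a square when its degree is `e_i + e_j` with `i ≠ j`. -/
def IsSquarePair {E : ColouredGraph k} (φ : MorphOf E) : Prop :=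
  ∃ i j : Fin k, i ≠ j ∧ φ.1 = Pi.single i 1 + Pi.single j 1

/-- A complete collection of squares. -/
def Complete (E : ColouredGraph k) (C : Set (MorphOf E)) : Prop :=
  (∀ φ ∈ C, IsSquarePair φ) ∧
  ∀ e f : E.E, E.s e = E.r f → E.c e ≠ E.c f →
    ∃! φ : MorphOf E, φ ∈ C ∧ Traverses φ.2 [e, f]

/-- `CRel C e f f' e'` means `ef ∼_C f'e'`: the paths `ef` and `f'e'` traverse a
common square of `C`, with `f'` of the colour of `f` and `e'` of the colour of `e`. -/
def CRel (E : ColouredGraph k) (C : Set (MorphOf E)) (e f f' e' : E.E) : Prop :=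
  E.c f' = E.c f ∧ E.c e' = E.c e ∧
  ∃ φ ∈ C, Traverses φ.2 [e, f] ∧ Traverses φ.2 [f', e']

/-- Associativity of a complete collection of squares. -/
def Associative (E : ColouredGraph k) (C : Set (MorphOf E)) : Prop :=
  ∀ f g h f1 f2 g1 g2 h1 h2 f1' f2' g1' g2' h1' h2' : E.E,
    E.s f = E.r g → E.s g = E.r h →
    E.c f ≠ E.c g → E.c g ≠ E.c h → E.c f ≠ E.c h →
    CRel E C f g g1' f1' → CRel E C f1' h h1' f2' → CRel E C g1' h1' h2' g2' →
    CRel E C g h h1 g1 → CRel E C f h1 h2 f1 → CRel E C f1 g1 g2 f2 →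
    f2 = f2' ∧ g2 = g2' ∧ h2 = h2'

/-- `λ` is `C`-compatible: every square occurring in `λ` belongs to `C`. -/
def CComp (E : ColouredGraph k) (C : Set (MorphOf E)) {M : Fin k → ℕ}
    (lam : CGM (grid k M) E) : Prop :=
  ∀ (p : Fin k → ℕ) (i j : Fin k), i ≠ j →
    ∀ h : p + (Pi.single i 1 + Pi.single j 1) ≤ M,
      (⟨Pi.single i 1 + Pi.single j 1,
        restrictTo lam p (Pi.single i 1 + Pi.single j 1) h⟩ : MorphOf E) ∈ C

/-- A finite path in a coloured graph, remembering its range vertex (so that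
length-zero paths are vertices). -/
structure FinPath (E : ColouredGraph k) where
  rng : E.V
  edges : List E.E
  chain : edges.Chain' (fun e f => E.s e = E.r f)
  head_rng : ∀ e ∈ edges.head?, E.r e = rng

/-- Source vertex of a finite path. -/
def FinPath.src {E : ColouredGraph k} (x : FinPath E) : E.V :=
  (x.edges.getLast?).elim x.rng E.s

/-- One application of a commuting square: replace a consecutive bicoloured pair
by its `C`-equivalent pair. -/
def SwapStep (E : ColouredGraph k) (C : Set (MorphOf E)) (x y : List E.E) : Prop :=
  ∃ (l r : List E.E) (e f f' e' : E.E),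
    x = l ++ e :: f :: r ∧ y = l ++ f' :: e' :: r ∧ CRel E C e f f' e'

/-- The relation on finite paths generating the equivalence `∼`. -/
def PathRel (E : ColouredGraph k) (C : Set (MorphOf E)) (x y : FinPath E) : Prop :=
  x.rng = y.rng ∧ SwapStep E C x.edges y.edges


/-- `IsLamEC E C Λ` says that the `k`-graph structure `Λ` on vertices `E.V` and
morphisms the `C`-compatible coloured-graph morphisms from grids into `E`
has the structure maps of `Λ_{(E,C)}`: degree `d(λ) = m`, range `λ(0)`,
source `λ(d(λ))`, identities of degree `0`, and composition characterised by
its restrictions. -/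
def IsLamEC (E : ColouredGraph k) (C : Set (MorphOf E))
    (Λ : KGraph k E.V {φ : MorphOf E // CComp E C φ.2}) : Prop :=
  (∀ φ, Λ.d φ = φ.1.1) ∧
  (∀ φ, Λ.rng φ = gRng φ.1.2) ∧
  (∀ φ, Λ.src φ = gSrc φ.1.2) ∧
  (∀ v : E.V, (Λ.idm v).1.1 = (0 : Fin k → ℕ) ∧ gRng (Λ.idm v).1.2 = v) ∧
  (∀ φ ψ, Λ.src φ = Λ.rng ψ →
    (Λ.comp φ ψ).1.1 = φ.1.1 + ψ.1.1 ∧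
    ∃ (h1 : (0 : Fin k → ℕ) + φ.1.1 ≤ (Λ.comp φ ψ).1.1)
      (h2 : φ.1.1 + ψ.1.1 ≤ (Λ.comp φ ψ).1.1),
      (⟨φ.1.1, restrictTo (Λ.comp φ ψ).1.2 0 φ.1.1 h1⟩ : MorphOf E) = φ.1 ∧
      (⟨ψ.1.1, restrictTo (Λ.comp φ ψ).1.2 φ.1.1 ψ.1.1 h2⟩ : MorphOf E) = ψ.1)

/-- The skeleton of a `k`-graph: vertices are the objects and edges are the
morphisms of degree `e_i`, coloured by `i`. -/
noncomputable def skel {O H : Type} (Λ : KGraph k O H) : ColouredGraph k where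
  V := O
  E := {h : H // ∃ i : Fin k, Λ.d h = Pi.single i 1}
  r e := Λ.rng e.1
  s e := Λ.src e.1
  c e := Classical.choose e.2

/-- The collection `C_Λ` of commuting squares of a `k`-graph: the squares
`φ_λ` for `λ ∈ Λ^{e_i+e_j}` (`i ≠ j`), given on vertices by `φ_λ(n) = λ(n)`
and on edges by `φ_λ(n + v_l) = λ(n, n + e_l)`. -/
noncomputable def skelSquares {O H : Type} (Λ : KGraph k O H) :
    Set (MorphOf (skel Λ)) :=
  {ψ | ∃ (i j : Fin k), i ≠ j ∧ ∃ lam : H,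
    Λ.d lam = Pi.single i 1 + Pi.single j 1 ∧
    ψ.1 = Pi.single i 1 + Pi.single j 1 ∧
    (∀ (n : Fin k → ℕ) (hn : n ≤ ψ.1), ∃ a : H,
      IsSegment Λ lam a 0 n ∧ ψ.2.onV ⟨n, hn⟩ = Λ.src a) ∧
    (∀ (n : Fin k → ℕ) (l : Fin k) (hn : n + Pi.single l 1 ≤ ψ.1),
      IsSegment Λ lam (ψ.2.onE ⟨(n, l), hn⟩).1 n (n + Pi.single l 1))}

/-!
`θ_γ` reads off the vertices `γ(n)` and unit segments `γ(n, n + e_i)` of `γ` and pushes them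
along `ψ`. Its squares are the images under `ψ` of the squares `φ_λ` of the bicoloured segments
`λ` of `γ`, so `θ_γ` is `C`-compatible.

Everything else is an induction on the degree that peels off one edge: by unique factorisation
`γ = γ(0, e_i) γ(e_i, d γ)`. Reading off the first edge and the restriction to `[e_i, d γ]` gives
injectivity. For surjectivity, lift the first edge of a `C`-compatible `f` and, by induction,
its restriction to `[e_i, d f]`, then compose. The lift agrees with `f` on that edge and on
`[e_i, d f]`. Completeness of `C` says a square is determined by one of its two-edge paths, so
this agreement propagates across the rest of the grid. Finally, a composite `θ_μ θ_ν` in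
`Λ_{(E,C)}` is some `θ_γ` whose restrictions to `[0, d μ]` and `[d μ, d μ + d ν]` are `θ_μ` and
`θ_ν`, so injectivity gives `γ = μ ν`.
-/

section NatVectors

variable {ι : Type*} [DecidableEq ι]

theorem single_le_iff {i : ι} {x : ι → ℕ} : Pi.single i 1 ≤ x ↔ 1 ≤ x i := by
  refine ⟨fun h => by simpa using h i, fun h j => ?_⟩
  rcases eq_or_ne j i with rfl | hj
  · simpa using h
  · simp [Pi.single_eq_of_ne hj]

theorem single_eq_single_iff {i j : ι} : (Pi.single i 1 : ι → ℕ) = Pi.single j 1 ↔ i = j := by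
  refine ⟨fun h => by_contra fun hij => ?_, fun h => h ▸ rfl⟩
  simpa [Pi.single_eq_of_ne hij] using congrFun h i

theorem exists_single_le_of_ne_zero {m : ι → ℕ} (hm : m ≠ 0) : ∃ i, Pi.single i 1 ≤ m :=
  let ⟨i, hi⟩ := Function.ne_iff.mp hm
  ⟨i, single_le_iff.mpr (Nat.one_le_iff_ne_zero.mpr hi)⟩

theorem add_single_add_le {i : ι} {x y m : ι → ℕ} (hx : x i = 0) (hy : y i = 0)
    (h : x + y ≤ Pi.single i 1 + m) : x + (Pi.single i 1 + y) ≤ Pi.single i 1 + m := by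
  intro r
  have hr := h r
  simp only [Pi.add_apply] at hr ⊢
  rcases eq_or_ne r i with rfl | hri
  · simp only [Pi.single_eq_same, hx, hy] at hr ⊢
    omega
  · simp only [Pi.single_eq_of_ne hri] at hr ⊢
    omega

@[elab_as_elim]
theorem induction_single_add [Finite ι] {P : (ι → ℕ) → Prop} (m : ι → ℕ) (zero : P 0)
    (single_add : ∀ i m, P m → P (Pi.single i 1 + m)) : P m := by
  induction m using WellFoundedLT.induction with
  | _ m ih =>
  rcases eq_or_ne m 0 with rfl | hm
  · exact zero
  obtain ⟨i, hi⟩ := exists_single_le_of_ne_zero hm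
  rw [← add_tsub_cancel_of_le hi]
  refine single_add i _ (ih _ (lt_of_le_of_ne tsub_le_self fun h => ?_))
  have := congrFun h i
  have := single_le_iff.mp hi
  simp only [Pi.sub_apply, Pi.single_eq_same] at *
  omega

end NatVectors

namespace KGraph

variable {k : ℕ} {O H : Type} (Γ : KGraph k O H)

theorem comp_inj {a b a' b' : H} (hab : Γ.src a = Γ.rng b) (hab' : Γ.src a' = Γ.rng b')
    (h : Γ.comp a b = Γ.comp a' b') (hd : Γ.d a = Γ.d a') : a = a' ∧ b = b' := by
  have hd' : Γ.d b = Γ.d b' := by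
    have := Γ.d_comp a b hab
    rw [h, Γ.d_comp a' b' hab', hd] at this
    exact (add_left_cancel this).symm
  exact Prod.ext_iff.mp <| (Γ.factor _ _ _ (Γ.d_comp a b hab)).unique
    (y₁ := (a, b)) (y₂ := (a', b')) ⟨hab, rfl, rfl, rfl⟩ ⟨hab', h.symm, hd.symm, hd'.symm⟩

theorem eq_idm_of_d_eq_zero {a : H} (h : Γ.d a = 0) : a = Γ.idm (Γ.rng a) :=
  (Γ.comp_inj (Γ.src_idm _) (Γ.rng_idm _).symm (by rw [Γ.idm_comp, Γ.comp_idm])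
    (by rw [Γ.d_idm, h])).1.symm

theorem exists_factor {γ : H} {n : Fin k → ℕ} (h : n ≤ Γ.d γ) :
    ∃ a b, Γ.src a = Γ.rng b ∧ Γ.comp a b = γ ∧ Γ.d a = n ∧ Γ.d b = Γ.d γ - n :=
  let ⟨⟨a, b⟩, hab, _⟩ := Γ.factor γ n (Γ.d γ - n) (add_tsub_cancel_of_le h).symm
  ⟨a, b, hab⟩

theorem exists_isSegment {γ : H} {p q : Fin k → ℕ} (h : p + q ≤ Γ.d γ) :
    ∃ s, IsSegment Γ γ s p (p + q) := by
  obtain ⟨a, c, hac, hγ, ha, hc⟩ := Γ.exists_factor (le_self_add.trans h)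
  obtain ⟨s, b, hsb, rfl, hs, -⟩ :=
    Γ.exists_factor (hc ▸ le_tsub_of_add_le_left h : q ≤ Γ.d c)
  exact ⟨s, a, b, hac.trans (Γ.rng_comp _ _ hsb), hsb, hγ, ha, by rw [hs, add_tsub_cancel_left]⟩

end KGraph

section IsSegment

variable {k : ℕ} {O H : Type} {Γ : KGraph k O H}

theorem IsSegment.unique {γ s s' : H} {p q : Fin k → ℕ} (h : IsSegment Γ γ s p q)
    (h' : IsSegment Γ γ s' p q) : s = s' := by
  obtain ⟨a, b, has, hsb, hγ, ha, hs⟩ := h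
  obtain ⟨a', b', has', hsb', hγ', ha', hs'⟩ := h'
  have hsb_eq := (Γ.comp_inj (by rwa [Γ.rng_comp _ _ hsb]) (by rwa [Γ.rng_comp _ _ hsb'])
    (hγ.trans hγ'.symm) (ha.trans ha'.symm)).2
  exact (Γ.comp_inj hsb hsb' hsb_eq (hs.trans hs'.symm)).1

theorem IsSegment.trans {γ σ s : H} {p q a b : Fin k → ℕ}
    (h₁ : IsSegment Γ γ σ p (p + q)) (h₂ : IsSegment Γ σ s a (a + b)) :
    IsSegment Γ γ s (p + a) (p + a + b) := by
  obtain ⟨x, y, hxs, hsy, rfl, rfl, hs⟩ := h₂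
  obtain ⟨u, v, huσ, hσv, rfl, rfl, -⟩ := h₁
  have hx_sy : Γ.src x = Γ.rng (Γ.comp s y) := by rwa [Γ.rng_comp _ _ hsy]
  have hyv : Γ.src y = Γ.rng v := by rwa [Γ.src_comp _ _ hx_sy, Γ.src_comp _ _ hsy] at hσv
  have hux : Γ.src u = Γ.rng x := by rwa [Γ.rng_comp _ _ hx_sy] at huσ
  have hsyv : Γ.src s = Γ.rng (Γ.comp y v) := by rwa [Γ.rng_comp _ _ hyv]
  refine ⟨Γ.comp u x, Γ.comp y v, by rwa [Γ.src_comp _ _ hux], hsyv, ?_, Γ.d_comp _ _ hux, ?_⟩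
  · rw [Γ.comp_assoc _ _ _ hux (by rwa [Γ.rng_comp _ _ hsyv]),
      Γ.comp_assoc _ _ _ hx_sy (by rwa [Γ.src_comp _ _ hsy]), Γ.comp_assoc _ _ _ hsy hyv]
  · rw [hs, add_tsub_cancel_left, add_tsub_cancel_left]

end IsSegment

namespace KGraph

variable {k : ℕ} {O H : Type} (Γ : KGraph k O H)

/-- The segment `γ(p, p + q)`, indexed by its start and its degree; an arbitrary morphism
unless `p + q ≤ d γ`. -/
noncomputable def seg (γ : H) (p q : Fin k → ℕ) : H :=
  @Classical.epsilon H ⟨γ⟩ fun s => IsSegment Γ γ s p (p + q)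

variable {Γ}

theorem isSegment_seg {γ : H} {p q : Fin k → ℕ} (h : p + q ≤ Γ.d γ) :
    IsSegment Γ γ (Γ.seg γ p q) p (p + q) :=
  Classical.epsilon_spec (Γ.exists_isSegment h)

theorem seg_eq_of_isSegment {γ s : H} {p q : Fin k → ℕ} (h : IsSegment Γ γ s p (p + q)) :
    Γ.seg γ p q = s :=
  (Classical.epsilon_spec (p := (IsSegment Γ γ · p (p + q))) ⟨s, h⟩).unique h

theorem d_seg {γ : H} {p q : Fin k → ℕ} (h : p + q ≤ Γ.d γ) : Γ.d (Γ.seg γ p q) = q := by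
  obtain ⟨-, -, -, -, -, -, hd⟩ := isSegment_seg h
  rwa [add_tsub_cancel_left] at hd

theorem seg_comp_left {μ ν : H} (h : Γ.src μ = Γ.rng ν) :
    Γ.seg (Γ.comp μ ν) 0 (Γ.d μ) = μ :=
  seg_eq_of_isSegment ⟨Γ.idm (Γ.rng μ), ν, Γ.src_idm _, h,
    by rw [← Γ.rng_comp _ _ h, Γ.idm_comp], Γ.d_idm _, by simp⟩

theorem seg_comp_right {μ ν : H} (h : Γ.src μ = Γ.rng ν) :
    Γ.seg (Γ.comp μ ν) (Γ.d μ) (Γ.d ν) = ν :=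
  seg_eq_of_isSegment ⟨μ, Γ.idm (Γ.src ν), h, (Γ.rng_idm _).symm, by rw [Γ.comp_idm], rfl,
    by rw [add_tsub_cancel_left]⟩

theorem seg_zero_zero (γ : H) : Γ.seg γ 0 0 = Γ.idm (Γ.rng γ) := by
  simpa only [Γ.idm_comp, Γ.d_idm] using seg_comp_left (Γ.src_idm (Γ.rng γ))

theorem seg_zero_d (γ : H) : Γ.seg γ 0 (Γ.d γ) = γ := by
  simpa only [Γ.comp_idm] using seg_comp_left (Γ.rng_idm (Γ.src γ)).symm

theorem seg_seg {γ : H} {p q a b : Fin k → ℕ} (hpq : p + q ≤ Γ.d γ) (hab : a + b ≤ q) :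
    Γ.seg (Γ.seg γ p q) a b = Γ.seg γ (p + a) b :=
  (seg_eq_of_isSegment ((isSegment_seg hpq).trans (isSegment_seg (hab.trans (d_seg hpq).ge)))).symm

theorem rng_seg {γ : H} {p q : Fin k → ℕ} (h : p + q ≤ Γ.d γ) :
    Γ.rng (Γ.seg γ p q) = Γ.src (Γ.seg γ 0 p) := by
  obtain ⟨a, b, has, hsb, hγ, ha, -⟩ := isSegment_seg h
  generalize Γ.seg γ p q = s at *
  subst hγ ha
  rw [seg_comp_left (by rwa [Γ.rng_comp _ _ hsb]), has]

theorem src_seg {γ : H} {p q : Fin k → ℕ} (h : p + q ≤ Γ.d γ) :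
    Γ.src (Γ.seg γ p q) = Γ.src (Γ.seg γ 0 (p + q)) := by
  obtain ⟨a, b, has, hsb, hγ, ha, hs⟩ := isSegment_seg h
  generalize Γ.seg γ p q = s at *
  have hd : Γ.d (Γ.comp a s) = p + q := by rw [Γ.d_comp _ _ has, ha, hs, add_tsub_cancel_left]
  subst hγ
  rw [← Γ.comp_assoc _ _ _ has hsb, ← hd, seg_comp_left (by rwa [Γ.src_comp _ _ has]),
    Γ.src_comp _ _ has]

theorem comp_seg {γ : H} {p q : Fin k → ℕ} (h : p + q = Γ.d γ) :
    Γ.comp (Γ.seg γ 0 p) (Γ.seg γ p q) = γ := by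
  obtain ⟨a, b, has, hsb, hγ, ha, hs⟩ := isSegment_seg h.le
  generalize Γ.seg γ p q = s at *
  rw [add_tsub_cancel_left] at hs
  have hb : Γ.d b = 0 := by
    have := congrArg Γ.d hγ
    rw [Γ.d_comp _ _ (by rwa [Γ.rng_comp _ _ hsb]), Γ.d_comp _ _ hsb, ha, hs, ← h,
      ← add_assoc] at this
    simpa using this
  rw [Γ.eq_idm_of_d_eq_zero hb, ← hsb, Γ.comp_idm] at hγ
  subst hγ ha
  rw [seg_comp_left has]

end KGraph

section GridMorphisms

variable {k : ℕ} {E : ColouredGraph k}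

theorem CGM.ext {F : ColouredGraph k} {f g : CGM E F} (hV : f.onV = g.onV)
    (hE : f.onE = g.onE) : f = g := by
  cases f; cases g; cases hV; cases hE; rfl

theorem CGM.compose_injective {F G : ColouredGraph k} {g : CGM F G}
    (hV : Function.Injective g.onV) (hE : Function.Injective g.onE) :
    Function.Injective (g.compose : CGM E F → CGM E G) := fun _ _ h =>
  CGM.ext (hV.comp_left (congrArg CGM.onV h)) (hE.comp_left (congrArg CGM.onE h))

theorem MorphOf.mk_injective {m : Fin k → ℕ} :
    Function.Injective (fun f : CGM (grid k m) E => (⟨m, f⟩ : MorphOf E)) :=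
  fun _ _ h => eq_of_heq (Sigma.mk.inj_iff.mp h).2

theorem eq_of_gRng_eq {f g : CGM (grid k 0) E} (h : gRng f = gRng g) : f = g := by
  refine CGM.ext (funext fun n => ?_) (funext fun e => absurd (e.2 e.1.2) (by simp))
  obtain rfl : n = ⟨0, le_rfl⟩ := Subtype.ext (le_antisymm n.2 zero_le)
  exact h

theorem restrictTo_compose {F : ColouredGraph k} {M p q : Fin k → ℕ} (g : CGM E F)
    (f : CGM (grid k M) E) (h : p + q ≤ M) :
    restrictTo (g.compose f) p q h = g.compose (restrictTo f p q h) :=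
  rfl

theorem restrictTo_restrictTo {M p q p' q' : Fin k → ℕ} (f : CGM (grid k M) E)
    (h : p + q ≤ M) (h' : p' + q' ≤ q) :
    restrictTo (restrictTo f p q h) p' q' h' =
      restrictTo f (p + p') q' (by rw [add_assoc]; exact (add_le_add_right h' p).trans h) :=
  CGM.ext (funext fun n => congrArg f.onV (Subtype.ext (add_assoc p p' n.1).symm))
    (funext fun e => congrArg f.onE (Subtype.ext (Prod.ext (add_assoc p p' e.1.1).symm rfl)))

theorem onE_eq_of_restrictTo_eq {M p q n : Fin k → ℕ} {l : Fin k} {f g : CGM (grid k M) E}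
    {h : p + q ≤ M} (hres : restrictTo f p q h = restrictTo g p q h)
    (hn : n + Pi.single l 1 ≤ q) (h' : p + n + Pi.single l 1 ≤ M) :
    f.onE ⟨(p + n, l), h'⟩ = g.onE ⟨(p + n, l), h'⟩ :=
  congrArg (·.onE ⟨(n, l), hn⟩) hres

theorem onE_add_eq_of_restrictTo_eq {p m n : Fin k → ℕ} {l : Fin k}
    {f g : CGM (grid k (p + m)) E} (hres : restrictTo f p m le_rfl = restrictTo g p m le_rfl)
    (h : p + n + Pi.single l 1 ≤ p + m) :
    f.onE ⟨(p + n, l), h⟩ = g.onE ⟨(p + n, l), h⟩ :=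
  onE_eq_of_restrictTo_eq hres (le_of_add_le_add_left (by rwa [← add_assoc])) h

theorem traverses_restrictTo_square {M p : Fin k → ℕ} {i j : Fin k} (f : CGM (grid k M) E)
    (h : p + (Pi.single i 1 + Pi.single j 1) ≤ M) (h₁ : p + Pi.single i 1 ≤ M)
    (h₂ : p + Pi.single i 1 + Pi.single j 1 ≤ M) :
    Traverses (restrictTo f p _ h) [f.onE ⟨(p, i), h₁⟩, f.onE ⟨(p + Pi.single i 1, j), h₂⟩] := by
  have hc₁ : E.c (f.onE ⟨(p, i), h₁⟩) = i := f.c_comm _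
  have hc₂ : E.c (f.onE ⟨(p + Pi.single i 1, j), h₂⟩) = j := f.c_comm _
  refine ⟨by simp [colourVec, hc₁, hc₂], fun l hl => ?_⟩
  rcases l with _ | _ | l
  · simp only [List.take_zero, List.get_eq_getElem, List.getElem_cons_zero, hc₁]
    exact ⟨by simp [colourVec], congrArg f.onE (Subtype.ext (Prod.ext (by simp [colourVec]) rfl))⟩
  · simp only [List.take_succ_cons, List.take_zero, List.get_eq_getElem,
      List.getElem_cons_succ, List.getElem_cons_zero, hc₂]
    exact ⟨by simp [colourVec, hc₁],
      congrArg f.onE (Subtype.ext (Prod.ext (by simp [colourVec, hc₁]) rfl))⟩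
  · simp at hl

end GridMorphisms

section CompatibleGridMorphisms

variable {k : ℕ} {E : ColouredGraph k} {C : Set (MorphOf E)}

theorem CComp.restrictTo {M p q : Fin k → ℕ} {f : CGM (grid k M) E}
    (hf : CComp E C f) (h : p + q ≤ M) : CComp E C (restrictTo f p q h) := by
  intro p' i j hij h'
  rw [restrictTo_restrictTo]
  exact hf _ i j hij _

theorem restrictTo_square_eq (hC : Complete E C) {M p : Fin k → ℕ} {f g : CGM (grid k M) E}
    (hf : CComp E C f) (hg : CComp E C g) {i j : Fin k} (hij : i ≠ j)
    (h : p + (Pi.single i 1 + Pi.single j 1) ≤ M)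
    (h₁ : ∀ h₁, f.onE ⟨(p, i), h₁⟩ = g.onE ⟨(p, i), h₁⟩)
    (h₂ : ∀ h₂, f.onE ⟨(p + Pi.single i 1, j), h₂⟩ = g.onE ⟨(p + Pi.single i 1, j), h₂⟩) :
    restrictTo f p _ h = restrictTo g p _ h := by
  have hb₂ : p + Pi.single i 1 + Pi.single j 1 ≤ M := by rwa [add_assoc]
  have hb₁ : p + Pi.single i 1 ≤ M := le_self_add.trans hb₂
  have hs : E.s (f.onE ⟨(p, i), hb₁⟩) = E.r (f.onE ⟨(p + Pi.single i 1, j), hb₂⟩) :=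
    (f.s_comm _).trans (f.r_comm ⟨(p + Pi.single i 1, j), hb₂⟩).symm
  have hc : E.c (f.onE ⟨(p, i), hb₁⟩) ≠ E.c (f.onE ⟨(p + Pi.single i 1, j), hb₂⟩) :=
    fun hc => hij ((f.c_comm _).symm.trans (hc.trans (f.c_comm _)))
  obtain ⟨_, -, huniq⟩ := hC.2 _ _ hs hc
  have htf := traverses_restrictTo_square f h hb₁ hb₂
  have htg := traverses_restrictTo_square g h hb₁ hb₂
  rw [← h₁, ← h₂] at htg
  exact MorphOf.mk_injective
    ((huniq _ ⟨hf p i j hij h, htf⟩).trans (huniq _ ⟨hg p i j hij h, htg⟩).symm)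

-- Agreement on `(n, i)` spreads to `(n + e_l, i)`: the square at `n` with sides `e_i`, `e_l` is
-- pinned down by its path through `n + e_i`, whose second edge lies in `[e_i, e_i + m]`.
theorem onE_single_eq_of_restrictTo_eq (hC : Complete E C) {i : Fin k} {m : Fin k → ℕ}
    {f g : CGM (grid k (Pi.single i 1 + m)) E} (hf : CComp E C f) (hg : CComp E C g)
    (h₀ : ∀ h, f.onE ⟨(0, i), h⟩ = g.onE ⟨(0, i), h⟩)
    (hres : restrictTo f (Pi.single i 1) m le_rfl = restrictTo g (Pi.single i 1) m le_rfl)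
    (n : Fin k → ℕ) : ∀ h, f.onE ⟨(n, i), h⟩ = g.onE ⟨(n, i), h⟩ := by
  induction n using induction_single_add with
  | zero => exact h₀
  | single_add l n ih =>
    rcases eq_or_ne l i with rfl | hli
    · exact onE_add_eq_of_restrictTo_eq hres
    rw [add_comm (Pi.single l 1)]
    intro h
    have hsq : n + (Pi.single i 1 + Pi.single l 1) ≤ Pi.single i 1 + m :=
      calc _ = n + Pi.single l 1 + Pi.single i 1 := by abel
        _ ≤ _ := h
    have := restrictTo_square_eq hC hf hg hli.symm hsq ih
      (by rw [add_comm n]; exact onE_add_eq_of_restrictTo_eq hres)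
    exact onE_eq_of_restrictTo_eq this (add_comm _ _).le h

theorem onE_eq_of_restrictTo_single_eq (hC : Complete E C) {i : Fin k} {m : Fin k → ℕ}
    {f g : CGM (grid k (Pi.single i 1 + m)) E} (hf : CComp E C f) (hg : CComp E C g)
    (h₀ : ∀ h, f.onE ⟨(0, i), h⟩ = g.onE ⟨(0, i), h⟩)
    (hres : restrictTo f (Pi.single i 1) m le_rfl = restrictTo g (Pi.single i 1) m le_rfl) :
    f.onE = g.onE := by
  funext ⟨⟨n, j⟩, h⟩
  by_cases hin : Pi.single i 1 ≤ n
  · obtain ⟨n, rfl⟩ := exists_add_of_le hin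
    exact onE_add_eq_of_restrictTo_eq hres h
  have hnear := onE_single_eq_of_restrictTo_eq hC hf hg h₀ hres n
  rcases eq_or_ne j i with rfl | hji
  · exact hnear h
  have hni : n i = 0 := by simpa [single_le_iff] using hin
  have hsq := add_single_add_le hni (by simp [Pi.single_eq_of_ne hji.symm]) h
  have := restrictTo_square_eq hC hf hg hji.symm hsq hnear
    (by rw [add_comm n]; exact onE_add_eq_of_restrictTo_eq hres)
  simpa using onE_eq_of_restrictTo_eq this (n := 0) (l := j) (by simp) (by simpa using h)

theorem eq_of_restrictTo_single_eq (hC : Complete E C) {i : Fin k} {m : Fin k → ℕ}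
    {f g : CGM (grid k (Pi.single i 1 + m)) E} (hf : CComp E C f) (hg : CComp E C g)
    (h₀ : ∀ h, f.onE ⟨(0, i), h⟩ = g.onE ⟨(0, i), h⟩)
    (hres : restrictTo f (Pi.single i 1) m le_rfl = restrictTo g (Pi.single i 1) m le_rfl) :
    f = g := by
  have hE := onE_eq_of_restrictTo_single_eq hC hf hg h₀ hres
  refine CGM.ext (funext fun ⟨x, hx⟩ => ?_) hE
  by_cases hix : Pi.single i 1 ≤ x
  · obtain ⟨x, rfl⟩ := exists_add_of_le hix
    exact congrArg (·.onV ⟨x, le_of_add_le_add_left hx⟩) hres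
  have hxi : x i = 0 := by simpa [single_le_iff] using hix
  have hb : x + Pi.single i 1 ≤ Pi.single i 1 + m := by
    simpa using add_single_add_le hxi (y := 0) rfl (by simpa using hx)
  exact (f.r_comm ⟨(x, i), hb⟩).symm.trans ((congrArg E.r (congrFun hE _)).trans (g.r_comm _))

end CompatibleGridMorphisms

section Skeleton

variable {k : ℕ} {O H : Type} {Γ : KGraph k O H}

theorem skel_d_eq_single (e : (skel Γ).E) : Γ.d e.1 = Pi.single ((skel Γ).c e) 1 :=
  e.2.choose_spec

theorem skel_c_eq {e : (skel Γ).E} {i : Fin k} (h : Γ.d e.1 = Pi.single i 1) :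
    (skel Γ).c e = i :=
  single_eq_single_iff.mp ((skel_d_eq_single e).symm.trans h)

variable (Γ) in
/-- `θ_γ` before applying `ψ`: `n ↦ γ(n)` on vertices and `n + v_i ↦ γ(n, n + e_i)` on edges. -/
noncomputable def KGraph.toSkel (γ : H) {m : Fin k → ℕ} (hm : Γ.d γ = m) :
    CGM (grid k m) (skel Γ) where
  onV n := Γ.src (Γ.seg γ 0 n.1)
  onE e := ⟨Γ.seg γ e.1.1 (Pi.single e.1.2 1), e.1.2, KGraph.d_seg (e.2.trans hm.ge)⟩
  r_comm e := KGraph.rng_seg (e.2.trans hm.ge)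
  s_comm e := KGraph.src_seg (e.2.trans hm.ge)
  c_comm e := skel_c_eq (KGraph.d_seg (e.2.trans hm.ge))

namespace KGraph

theorem gRng_toSkel (γ : H) {m : Fin k → ℕ} (hm : Γ.d γ = m) :
    gRng (Γ.toSkel γ hm) = Γ.rng γ := by
  show Γ.src (Γ.seg γ 0 0) = _
  rw [seg_zero_zero, Γ.src_idm]

theorem gSrc_toSkel (γ : H) {m : Fin k → ℕ} (hm : Γ.d γ = m) :
    gSrc (Γ.toSkel γ hm) = Γ.src γ := by
  subst hm
  show Γ.src (Γ.seg γ 0 (Γ.d γ)) = _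
  rw [seg_zero_d]

theorem restrictTo_toSkel {γ σ : H} {m p q : Fin k → ℕ} (hm : Γ.d γ = m) (h : p + q ≤ m)
    (hσ : Γ.seg γ p q = σ) (hq : Γ.d σ = q) :
    restrictTo (Γ.toSkel γ hm) p q h = Γ.toSkel σ hq := by
  subst hσ
  have hpq := h.trans hm.ge
  refine CGM.ext (funext fun n => ?_) (funext fun e => Subtype.ext ?_)
  · show Γ.src (Γ.seg γ 0 (p + n.1)) = Γ.src (Γ.seg (Γ.seg γ p q) 0 n.1)
    have hn : 0 + n.1 ≤ q := (zero_add n.1).symm ▸ n.2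
    rw [seg_seg hpq hn, add_zero, src_seg (((add_le_add_right n.2 p).trans h).trans hm.ge)]
  · exact (seg_seg hpq e.2).symm

theorem toSkel_mem_skelSquares {lam : H} {i j : Fin k} (hij : i ≠ j)
    (hd : Γ.d lam = Pi.single i 1 + Pi.single j 1) :
    (⟨_, Γ.toSkel lam hd⟩ : MorphOf (skel Γ)) ∈ skelSquares Γ :=
  ⟨i, j, hij, lam, hd, rfl,
    fun n hn => ⟨Γ.seg lam 0 n,
      by simpa only [zero_add] using isSegment_seg (p := 0) (q := n) (by rwa [zero_add, hd]),
      rfl⟩,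
    fun _ _ hn => isSegment_seg (hn.trans hd.ge)⟩

theorem toSkel_injective {γ γ' : H} {m : Fin k → ℕ} (hγ : Γ.d γ = m) (hγ' : Γ.d γ' = m)
    (h : Γ.toSkel γ hγ = Γ.toSkel γ' hγ') : γ = γ' := by
  induction m using induction_single_add generalizing γ γ' with
  | zero =>
    have hrng := congrArg gRng h
    rw [gRng_toSkel, gRng_toSkel] at hrng
    rw [Γ.eq_idm_of_d_eq_zero hγ, Γ.eq_idm_of_d_eq_zero hγ', hrng]
  | single_add i m ih =>
    have hfirst : Γ.seg γ 0 (Pi.single i 1) = Γ.seg γ' 0 (Pi.single i 1) :=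
      congrArg (fun f => (f.onE ⟨(0, i), (by simp)⟩).1) h
    have hrest := congrArg (restrictTo · (Pi.single i 1) m le_rfl) h
    simp only [restrictTo_toSkel hγ le_rfl rfl (d_seg hγ.ge),
      restrictTo_toSkel hγ' le_rfl rfl (d_seg hγ'.ge)] at hrest
    rw [← comp_seg hγ.symm, ← comp_seg hγ'.symm, hfirst, ih _ _ hrest]

end KGraph

end Skeleton

section Theta

variable {k : ℕ} {O H : Type} {Γ : KGraph k O H} {E : ColouredGraph k} {C : Set (MorphOf E)}
  {ψ : CGM (skel Γ) E}

variable (Γ ψ) in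
noncomputable def KGraph.theta (γ : H) : MorphOf E :=
  ⟨Γ.d γ, ψ.compose (Γ.toSkel γ rfl)⟩

namespace KGraph

theorem theta_eq_mk {γ : H} {m : Fin k → ℕ} (hm : Γ.d γ = m) :
    Γ.theta ψ γ = ⟨m, ψ.compose (Γ.toSkel γ hm)⟩ := by
  subst hm
  rfl

theorem mk_restrictTo_theta (γ : H) {p q : Fin k → ℕ} (h : p + q ≤ (Γ.theta ψ γ).1) :
    (⟨q, restrictTo (Γ.theta ψ γ).2 p q h⟩ : MorphOf E) = Γ.theta ψ (Γ.seg γ p q) := by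
  rw [theta_eq_mk (d_seg h)]
  exact congrArg (fun f => (⟨q, ψ.compose f⟩ : MorphOf E)) (restrictTo_toSkel rfl h rfl (d_seg h))

theorem cComp_compose_toSkel
    (hsq : ∀ φ ∈ skelSquares Γ, (⟨φ.1, ψ.compose φ.2⟩ : MorphOf E) ∈ C)
    (γ : H) {m : Fin k → ℕ} (hm : Γ.d γ = m) : CComp E C (ψ.compose (Γ.toSkel γ hm)) := by
  intro p i j hij h
  rw [restrictTo_compose, restrictTo_toSkel hm h rfl (d_seg (h.trans hm.ge))]
  exact hsq _ (toSkel_mem_skelSquares hij (d_seg (h.trans hm.ge)))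

theorem compose_toSkel_idm {v : O} {f : CGM (grid k 0) E} (hf : gRng f = ψ.onV v) :
    ψ.compose (Γ.toSkel (Γ.idm v) (Γ.d_idm v)) = f :=
  eq_of_gRng_eq ((congrArg ψ.onV ((gRng_toSkel _ _).trans (Γ.rng_idm v))).trans hf.symm)

theorem theta_idm {v : O} (φ : MorphOf E) (hφ : φ.1 = 0) (hr : gRng φ.2 = ψ.onV v) :
    Γ.theta ψ (Γ.idm v) = φ := by
  obtain ⟨m, f⟩ := φ
  subst hφ
  rw [theta_eq_mk (Γ.d_idm v), compose_toSkel_idm hr]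

theorem theta_injective (hψV : Function.Injective ψ.onV) (hψE : Function.Injective ψ.onE) :
    Function.Injective (Γ.theta ψ) := by
  intro a b h
  have hd : Γ.d b = Γ.d a := (congrArg Sigma.fst h).symm
  rw [theta_eq_mk hd] at h
  exact toSkel_injective rfl hd (CGM.compose_injective hψV hψE (MorphOf.mk_injective h))

theorem exists_compose_toSkel_eq (hC : Complete E C)
    (hsq : ∀ φ ∈ skelSquares Γ, (⟨φ.1, ψ.compose φ.2⟩ : MorphOf E) ∈ C)
    (hψV : Function.Bijective ψ.onV) (hψE : Function.Surjective ψ.onE)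
    {m : Fin k → ℕ} (f : CGM (grid k m) E) (hf : CComp E C f) :
    ∃ γ, ∃ hγ : Γ.d γ = m, ψ.compose (Γ.toSkel γ hγ) = f := by
  induction m using induction_single_add with
  | zero =>
    obtain ⟨v, hv⟩ := hψV.2 (gRng f)
    exact ⟨Γ.idm v, Γ.d_idm v, compose_toSkel_idm hv.symm⟩
  | single_add i m ih =>
    obtain ⟨ε, hε⟩ := hψE (f.onE ⟨(0, i), by simp⟩)
    have hdε : Γ.d ε.1 = Pi.single i 1 := by
      rw [skel_d_eq_single, ← ψ.c_comm, hε]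
      exact congrArg (Pi.single · 1) (f.c_comm _)
    obtain ⟨γ, hγ, hγf⟩ := ih (restrictTo f (Pi.single i 1) m le_rfl) (hf.restrictTo _)
    have hεγ : Γ.src ε.1 = Γ.rng γ := hψV.1 <| calc
      ψ.onV (Γ.src ε.1) = f.onV ⟨0 + Pi.single i 1, _⟩ :=
        (ψ.s_comm ε).symm.trans ((congrArg E.s hε).trans (f.s_comm _))
      _ = gRng (restrictTo f (Pi.single i 1) m le_rfl) :=
        congrArg f.onV (Subtype.ext (by simp))
      _ = ψ.onV (Γ.rng γ) := by rw [← hγf, ← gRng_toSkel γ hγ]; rfl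
    have hd : Γ.d (Γ.comp ε.1 γ) = Pi.single i 1 + m := by rw [Γ.d_comp _ _ hεγ, hdε, hγ]
    refine ⟨Γ.comp ε.1 γ, hd, eq_of_restrictTo_single_eq hC (cComp_compose_toSkel hsq _ hd) hf
      (fun _ => ?_) ?_⟩
    · rw [← hε]
      refine congrArg ψ.onE (Subtype.ext ?_)
      show Γ.seg (Γ.comp ε.1 γ) 0 (Pi.single i 1) = ε.1
      rw [← hdε, seg_comp_left hεγ]
    · rw [restrictTo_compose, restrictTo_toSkel hd le_rfl (hdε ▸ hγ ▸ seg_comp_right hεγ) hγ, hγf]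

theorem exists_theta_eq (hC : Complete E C)
    (hsq : ∀ φ ∈ skelSquares Γ, (⟨φ.1, ψ.compose φ.2⟩ : MorphOf E) ∈ C)
    (hψV : Function.Bijective ψ.onV) (hψE : Function.Surjective ψ.onE)
    (φ : MorphOf E) (hφ : CComp E C φ.2) : ∃ γ, Γ.theta ψ γ = φ := by
  obtain ⟨m, f⟩ := φ
  obtain ⟨γ, hγ, rfl⟩ := exists_compose_toSkel_eq hC hsq hψV hψE f hφ
  exact ⟨γ, theta_eq_mk hγ⟩

theorem theta_comp (hC : Complete E C)
    (hsq : ∀ φ ∈ skelSquares Γ, (⟨φ.1, ψ.compose φ.2⟩ : MorphOf E) ∈ C)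
    (hψV : Function.Bijective ψ.onV) (hψE : Function.Bijective ψ.onE) {μ ν : H}
    (φ : MorphOf E) (hφ : CComp E C φ.2) (hd : φ.1 = Γ.d μ + Γ.d ν)
    (h₁ : 0 + Γ.d μ ≤ φ.1) (h₂ : Γ.d μ + Γ.d ν ≤ φ.1)
    (hr₁ : (⟨Γ.d μ, restrictTo φ.2 0 (Γ.d μ) h₁⟩ : MorphOf E) = Γ.theta ψ μ)
    (hr₂ : (⟨Γ.d ν, restrictTo φ.2 (Γ.d μ) (Γ.d ν) h₂⟩ : MorphOf E) = Γ.theta ψ ν) :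
    Γ.theta ψ (Γ.comp μ ν) = φ := by
  obtain ⟨γ, rfl⟩ := exists_theta_eq hC hsq hψV hψE.2 φ hφ
  have hμ : Γ.seg γ 0 (Γ.d μ) = μ :=
    theta_injective hψV.1 hψE.1 ((mk_restrictTo_theta γ h₁).symm.trans hr₁)
  have hν : Γ.seg γ (Γ.d μ) (Γ.d ν) = ν :=
    theta_injective hψV.1 hψE.1 ((mk_restrictTo_theta γ h₂).symm.trans hr₂)
  rw [← comp_seg hd.symm, hμ, hν]

variable (Γ ψ) in
noncomputable def inducedFunctor (hC : Complete E C)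
    (hsq : ∀ φ ∈ skelSquares Γ, (⟨φ.1, ψ.compose φ.2⟩ : MorphOf E) ∈ C)
    (hψV : Function.Bijective ψ.onV) (hψE : Function.Bijective ψ.onE)
    (ΛE : KGraph k E.V {φ : MorphOf E // CComp E C φ.2}) (hΛE : IsLamEC E C ΛE) :
    KFunctor Γ ΛE where
  onObj := ψ.onV
  onHom γ := ⟨Γ.theta ψ γ, cComp_compose_toSkel hsq γ rfl⟩
  rng_comm γ := (hΛE.2.1 _).trans (congrArg ψ.onV (gRng_toSkel γ rfl))
  src_comm γ := (hΛE.2.2.1 _).trans (congrArg ψ.onV (gSrc_toSkel γ rfl))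
  idm_comm v := Subtype.ext (theta_idm _ (hΛE.2.2.2.1 _).1 (hΛE.2.2.2.1 _).2)
  comp_comm μ ν h := by
    have hsrc : ΛE.src ⟨Γ.theta ψ μ, cComp_compose_toSkel hsq μ rfl⟩ =
        ΛE.rng ⟨Γ.theta ψ ν, cComp_compose_toSkel hsq ν rfl⟩ := by
      rw [hΛE.2.2.1, hΛE.2.1]
      exact congrArg ψ.onV ((gSrc_toSkel μ rfl).trans (h.trans (gRng_toSkel ν rfl).symm))
    obtain ⟨hd, h₁, h₂, hr₁, hr₂⟩ := hΛE.2.2.2.2 _ _ hsrc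
    exact Subtype.ext (theta_comp hC hsq hψV hψE _ (ΛE.comp _ _).2 hd h₁ h₂ hr₁ hr₂)
  d_comm γ := hΛE.1 _

end KGraph

end Theta

theorem skeleton_iso_induces_kGraph_iso_general {k : ℕ} {O H : Type} (Γ : KGraph k O H)
    (E : ColouredGraph k) (C : Set (MorphOf E))
    (hC : Complete E C)
    (ψ : CGM (skel Γ) E)
    (hψV : Function.Bijective ψ.onV) (hψE : Function.Bijective ψ.onE)
    (hsq : ∀ φ ∈ skelSquares Γ, (⟨φ.1, ψ.compose φ.2⟩ : MorphOf E) ∈ C)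
    (ΛE : KGraph k E.V {φ : MorphOf E // CComp E C φ.2}) (hΛE : IsLamEC E C ΛE) :
    ∃ θ : KFunctor Γ ΛE,
      Function.Bijective θ.onObj ∧ Function.Bijective θ.onHom ∧
      θ.onObj = ψ.onV ∧
      (∀ γ : H, (θ.onHom γ).1.1 = Γ.d γ) ∧
      (∀ (γ : H) (n : Fin k → ℕ) (hn : n ≤ (θ.onHom γ).1.1) (a : H),
        IsSegment Γ γ a 0 n → (θ.onHom γ).1.2.onV ⟨n, hn⟩ = ψ.onV (Γ.src a)) ∧
      (∀ (γ : H) (n : Fin k → ℕ) (i : Fin k)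
        (hn : n + Pi.single i 1 ≤ (θ.onHom γ).1.1)
        (a : H) (ha : Γ.d a = Pi.single i 1),
        IsSegment Γ γ a n (n + Pi.single i 1) →
          (θ.onHom γ).1.2.onE ⟨(n, i), hn⟩ = ψ.onE ⟨a, ⟨i, ha⟩⟩) := by
  refine ⟨KGraph.inducedFunctor Γ ψ hC hsq hψV hψE ΛE hΛE, hψV,
    ⟨fun _ _ h => KGraph.theta_injective hψV.1 hψE.1 (congrArg Subtype.val h), fun φ => ?_⟩,
    rfl, fun _ => rfl, fun γ n _ a ha => ?_, fun γ n i _ a _ ha => ?_⟩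
  · obtain ⟨γ, hγ⟩ := KGraph.exists_theta_eq hC hsq hψV hψE.2 φ.1 φ.2
    exact ⟨γ, Subtype.ext hγ⟩
  · exact congrArg (fun s => ψ.onV (Γ.src s)) (KGraph.seg_eq_of_isSegment (by rwa [zero_add]))
  · exact congrArg ψ.onE (Subtype.ext (KGraph.seg_eq_of_isSegment ha))

/-- If `ψ` is a coloured-graph isomorphism from the skeleton of `Γ` onto `E`
carrying the squares of `Γ` into `C`, then `γ ↦ θ_γ` — where `θ_γ` acts by
`ψ` on vertices and segments of `γ` — is an isomorphism of `k`-graphs from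
`Γ` onto `Λ_{(E,C)}`. -/
theorem skeleton_iso_induces_kGraph_iso {k : ℕ} {O H : Type} (Γ : KGraph k O H)
    (E : ColouredGraph k) (C : Set (MorphOf E))
    (hC : Complete E C) (hA : Associative E C)
    (ψ : CGM (skel Γ) E)
    (hψV : Function.Bijective ψ.onV) (hψE : Function.Bijective ψ.onE)
    (hsq : ∀ φ ∈ skelSquares Γ, (⟨φ.1, ψ.compose φ.2⟩ : MorphOf E) ∈ C)
    (ΛE : KGraph k E.V {φ : MorphOf E // CComp E C φ.2}) (hΛE : IsLamEC E C ΛE) :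
    ∃ θ : KFunctor Γ ΛE,
      Function.Bijective θ.onObj ∧ Function.Bijective θ.onHom ∧
      θ.onObj = ψ.onV ∧
      (∀ γ : H, (θ.onHom γ).1.1 = Γ.d γ) ∧
      (∀ (γ : H) (n : Fin k → ℕ) (hn : n ≤ (θ.onHom γ).1.1) (a : H),
        IsSegment Γ γ a 0 n → (θ.onHom γ).1.2.onV ⟨n, hn⟩ = ψ.onV (Γ.src a)) ∧
      (∀ (γ : H) (n : Fin k → ℕ) (i : Fin k)
        (hn : n + Pi.single i 1 ≤ (θ.onHom γ).1.1)
        (a : H) (ha : Γ.d a = Pi.single i 1),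
        IsSegment Γ γ a n (n + Pi.single i 1) →
          (θ.onHom γ).1.2.onE ⟨(n, i), hn⟩ = ψ.onE ⟨a, ⟨i, ha⟩⟩) :=
  skeleton_iso_induces_kGraph_iso_general Γ E C hC ψ hψV hψE hsq ΛE hΛE

end Paper
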